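/- Define g : ℕ → ℕ by g(m) = sInf {x : ℕ | ∃ y, y ∈ eval (ofNat m) x ∧ y < 2^x}. Then g overtakes every total recursive function infinitely often: for every computable h : ℕ → ℕ, the set {m : ℕ | h m < g m} is infinite. -/

import Mathlib

/-!
Fix a bound `B`. Kleene's recursion theorem gives a code `e` computing `x ↦ 0` for `x > h m`
and diverging for `x ≤ h m`, where `m` is the index of `e` padded `B + 1` times. Padding keeps
the computed function and pushes the index above `B`, so `B < m` and `g m = h m + 1`.
-/

open Nat.Partrec Code Encodable

namespace Nat.Partrec.Code

def pad (c : Code) : Code := c.comp Code.id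

theorem eval_pad (c : Code) : c.pad.eval = c.eval := by
  funext x
  simp only [pad, eval, eval_id]
  exact Part.bind_some x c.eval

theorem encode_lt_encode_pad (c : Code) : encode c < encode c.pad :=
  (encode_lt_comp c Code.id).1

theorem primrec_pad : _root_.Primrec pad :=
  primrec₂_comp.comp _root_.Primrec.id (_root_.Primrec.const Code.id)

theorem eval_pad_iterate (c : Code) (j : ℕ) : (pad^[j] c).eval = c.eval := by
  induction j with
  | zero => rfl
  | succ j ih => rw [Function.iterate_succ_apply', eval_pad, ih]

theorem le_encode_pad_iterate (c : Code) (j : ℕ) : j ≤ encode (pad^[j] c) := by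
  induction j with
  | zero => exact Nat.zero_le _
  | succ j ih =>
    rw [Function.iterate_succ_apply']
    exact ih.trans_lt (encode_lt_encode_pad _)

theorem primrec_pad_iterate (j : ℕ) : _root_.Primrec pad^[j] :=
  .nat_iterate (.const j) .id (primrec_pad.comp .snd).to₂

end Nat.Partrec.Code

def zeroAbove (K : ℕ) : ℕ →. ℕ := fun x => if K < x then Part.some 0 else Part.none

theorem partrec₂_zeroAbove {α : Type*} [Primcodable α] {K : α → ℕ} (hK : Computable K) :
    Partrec₂ fun a => zeroAbove (K a) := by
  have hopt : Computable fun p : α × ℕ =>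
      cond (decide (K p.1 < p.2)) (some 0) (none : Option ℕ) :=
    .cond (Primrec.nat_lt.decide.to_comp.comp (hK.comp .fst) .snd) (.const _) (.const _)
  refine hopt.ofOption.of_eq fun ⟨a, x⟩ => ?_
  by_cases hx : K a < x <;> simp [zeroAbove, hx]

theorem sInf_setOf_mem_zeroAbove_lt_two_pow (K : ℕ) :
    sInf {x | ∃ y, y ∈ zeroAbove K x ∧ y < 2 ^ x} = K + 1 := by
  have hset : {x | ∃ y, y ∈ zeroAbove K x ∧ y < 2 ^ x} = Set.Ioi K := by
    ext x
    by_cases hx : K < x <;> simp [zeroAbove, hx]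
  rw [hset]
  exact le_antisymm (Nat.sInf_le (Nat.lt_succ_self K))
    (Nat.sInf_mem ⟨K + 1, Nat.lt_succ_self K⟩)

theorem exists_gt_lt_sInf_setOf_mem_eval_lt_two_pow {h : ℕ → ℕ} (hh : Computable h)
    (B : ℕ) :
    ∃ m, B < m ∧ h m < sInf {x : ℕ |
      ∃ y, y ∈ (Denumerable.ofNat Code m).eval x ∧ y < 2 ^ x} := by
  let index : Code → ℕ := fun c => encode (pad^[B + 1] c)
  have hindex : Computable index := (Primrec.encode.comp (primrec_pad_iterate _)).to_comp
  obtain ⟨e, he⟩ := fixed_point₂ (partrec₂_zeroAbove (hh.comp hindex))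
  refine ⟨index e, le_encode_pad_iterate e (B + 1), ?_⟩
  rw [Denumerable.ofNat_encode, eval_pad_iterate, he, sInf_setOf_mem_zeroAbove_lt_two_pow]
  exact Nat.lt_succ_self _

theorem g_overtakes_computable_infinitely_often (h : ℕ → ℕ) (hh : Computable h) :
    {m : ℕ | h m < sInf {x : ℕ |
      ∃ y, y ∈ (Denumerable.ofNat Nat.Partrec.Code m).eval x ∧ y < 2 ^ x}}.Infinite :=
  Set.infinite_of_forall_exists_gt fun B =>
    let ⟨m, hBm, hm⟩ := exists_gt_lt_sInf_setOf_mem_eval_lt_two_pow hh B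
    ⟨m, hm, hBm⟩
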